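/- Let X, Y, ε be random variables such that the conditional distribution of ε given X is the Dirac measure at M(X) for a measurable function M. Then the conditional distribution of ε given Y equals the pushforward under M of the conditional distribution of X given Y: μ_{ε|Y}(·|y) = M_# μ_{X|Y}(·|y) for almost every y. -/

import Mathlib

open MeasureTheory ProbabilityTheory

theorem stmt_1_general {Ω : Type*} [MeasurableSpace Ω]
    {n m : ℕ} (P : Measure Ω) [IsProbabilityMeasure P]
    (X : Ω → (Fin n → ℝ)) (Y : Ω → (Fin m → ℝ)) (ε : Ω → (Fin m → ℝ))
    (M : (Fin n → ℝ) → (Fin m → ℝ))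
    (hX : Measurable X) (hM : Measurable M)
    (hε : ε = M ∘ X) :
    ∀ᵐ y ∂(P.map Y),
      (condDistrib ε Y P) y = ((condDistrib X Y P) y).map M := by
  subst hε
  filter_upwards [condDistrib_comp Y hX.aemeasurable hM] with y hy
  rw [hy, Kernel.map_apply _ hM]

/-- If the conditional distribution of `ε` given `X` is the Dirac measure at `M(X)`
(i.e. `ε = M ∘ X` for measurable `M`), then for almost every observation `y`,
the conditional distribution of `ε` given `Y = y` is the pushforward under `M`
of the conditional distribution of `X` given `Y = y`. -/
theorem stmt_1 {Ω : Type*} [MeasurableSpace Ω] [StandardBorelSpace Ω]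
    {n m : ℕ} (P : Measure Ω) [IsProbabilityMeasure P]
    (X : Ω → (Fin n → ℝ)) (Y : Ω → (Fin m → ℝ)) (ε : Ω → (Fin m → ℝ))
    (M : (Fin n → ℝ) → (Fin m → ℝ))
    (hX : Measurable X) (hY : Measurable Y) (hM : Measurable M)
    (hε : ε = M ∘ X) :
    ∀ᵐ y ∂(P.map Y),
      (condDistrib ε Y P) y = ((condDistrib X Y P) y).map M :=
  stmt_1_general P X Y ε M hX hM hε
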